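/- Consider the distribution on ℝ⁶ with coordinates (t, u, v, u₁, u₂, v₁) annihilated by the one-forms du − u₁ dt, du₁ − u₂ dt, dv − v₁ dt (the Cartan distribution on J^{2,1}(ℝ, ℝ²)). This distribution D has rank 3, [D,D] has rank 5, [D,[D,D]] = Tℝ⁶, and D is degenerated parabolic: the associated symmetric form (a_{ij}) is identically zero. -/

import Mathlib

/-- The Lie bracket of vector fields on `ℝ⁶`. -/
noncomputable def vfLie {E : Type*} [NormedAddCommGroup E] [NormedSpace ℝ E]
    (V W : E → E) : E → E :=
  fun x => fderiv ℝ W x (V x) - fderiv ℝ V x (W x)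

/- Coordinates on `J^{2,1}(ℝ,ℝ²) ≅ ℝ⁶`: `p 0 = t, p 1 = u, p 2 = v, p 3 = u₁,
p 4 = u₂, p 5 = v₁`.  The Cartan distribution is spanned by
`Y = ∂_t + u₁∂_u + u₂∂_{u₁} + v₁∂_v`, `X₁ = ∂_{u₂}`, `X₂ = ∂_{v₁}`. -/

def Ycartan : (Fin 6 → ℝ) → (Fin 6 → ℝ) := fun p => ![1, p 3, p 5, p 4, 0, 0]
def X1cartan : (Fin 6 → ℝ) → (Fin 6 → ℝ) := fun _ => ![0, 0, 0, 0, 1, 0]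
def X2cartan : (Fin 6 → ℝ) → (Fin 6 → ℝ) := fun _ => ![0, 0, 0, 0, 0, 1]

/-! `X₁`, `X₂` are constant and `Y = ∂_t + L` is affine with `L` linear, so `[a, Y] = L a` for a
constant field `a`. Hence `[Xᵢ, Y]` is constant again, so `[Xᵢ, [Y, Xⱼ]] = 0` and the form `(a_{ij})`
vanishes. The brackets `[X₁, Y] = ∂_{u₁}`, `[X₂, Y] = ∂_v` show that `[D, D]` is the kernel of
`du − u₁ dt`, and `[Y, [X₁, Y]] = -∂_u` lies outside it, so `[D, [D, D]]` is everything. -/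

section VectorFields

variable {E : Type*} [NormedAddCommGroup E] [NormedSpace ℝ E]

theorem vfLie_swap (V W : E → E) : vfLie W V = -vfLie V W := by
  funext x; simp [vfLie]

theorem vfLie_const_const (a b : E) : vfLie (fun _ => a) (fun _ => b) = fun _ => 0 := by
  funext x; simp [vfLie]

theorem vfLie_const_affine (a c : E) (L : E →L[ℝ] E) :
    vfLie (fun _ => a) (fun x => c + L x) = fun _ => L a := by
  funext x
  simp [vfLie, (L.hasFDerivAt.const_add c).fderiv]

theorem vfLie_affine_const (a c : E) (L : E →L[ℝ] E) :
    vfLie (fun x => c + L x) (fun _ => a) = fun _ => -L a := by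
  rw [vfLie_swap, vfLie_const_affine]; rfl

end VectorFields

theorem Module.Dual.ker_sup_span_singleton_eq_top {K V : Type*} [Field K] [AddCommGroup V]
    [Module K V] {f : Module.Dual K V} {v : V} (hv : f v ≠ 0) :
    LinearMap.ker f ⊔ Submodule.span K {v} = ⊤ := by
  refine eq_top_iff.2 fun w _ => Submodule.mem_sup.2 ?_
  refine ⟨w - (f w / f v) • v, ?_, (f w / f v) • v, Submodule.smul_mem _ _
    (Submodule.mem_span_singleton_self v), sub_add_cancel _ _⟩
  simp [div_mul_cancel₀ _ hv]

def YcartanLinearPart : (Fin 6 → ℝ) →L[ℝ] (Fin 6 → ℝ) :=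
  ContinuousLinearMap.pi ![0, .proj 3, .proj 5, .proj 4, 0, 0]

@[simp]
theorem YcartanLinearPart_apply (w : Fin 6 → ℝ) :
    YcartanLinearPart w = ![0, w 3, w 5, w 4, 0, 0] := by
  funext i; fin_cases i <;> rfl

theorem Ycartan_eq_affine : Ycartan = fun p => ![1, 0, 0, 0, 0, 0] + YcartanLinearPart p := by
  funext p i; fin_cases i <;> simp [Ycartan]

theorem vfLie_const_Ycartan (a : Fin 6 → ℝ) :
    vfLie (fun _ => a) Ycartan = fun _ => YcartanLinearPart a := by
  rw [Ycartan_eq_affine, vfLie_const_affine]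

theorem vfLie_Ycartan_const (a : Fin 6 → ℝ) :
    vfLie Ycartan (fun _ => a) = fun _ => -YcartanLinearPart a := by
  rw [Ycartan_eq_affine, vfLie_affine_const]

theorem X1cartan_eq_const : X1cartan = fun _ => ![0, 0, 0, 0, 1, 0] := rfl

theorem X2cartan_eq_const : X2cartan = fun _ => ![0, 0, 0, 0, 0, 1] := rfl

theorem vfLie_X1cartan_X2cartan : vfLie X1cartan X2cartan = fun _ => 0 :=
  vfLie_const_const _ _

theorem vfLie_X1cartan_Ycartan : vfLie X1cartan Ycartan = fun _ => ![0, 0, 0, 1, 0, 0] := by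
  simp [X1cartan_eq_const, vfLie_const_Ycartan]

theorem vfLie_X2cartan_Ycartan : vfLie X2cartan Ycartan = fun _ => ![0, 0, 1, 0, 0, 0] := by
  simp [X2cartan_eq_const, vfLie_const_Ycartan]

theorem vfLie_Ycartan_vfLie_X1cartan_Ycartan :
    vfLie Ycartan (vfLie X1cartan Ycartan) = fun _ => -![0, 1, 0, 0, 0, 0] := by
  simp [vfLie_X1cartan_Ycartan, vfLie_Ycartan_const]

theorem mem_span_cartan_iff (p w : Fin 6 → ℝ) :
    w ∈ Submodule.span ℝ {X1cartan p, X2cartan p, Ycartan p} ↔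
      (w 1 - p 3 * w 0 = 0 ∧ w 3 - p 4 * w 0 = 0 ∧ w 2 - p 5 * w 0 = 0) := by
  rw [Submodule.mem_span_triple]
  constructor
  · rintro ⟨a, b, c, rfl⟩
    simp [X1cartan, X2cartan, Ycartan, mul_comm]
  · rintro ⟨h1, h3, h2⟩
    refine ⟨w 4, w 5, w 0, ?_⟩
    funext i
    fin_cases i <;> simp [X1cartan, X2cartan, Ycartan] <;> linarith

theorem linearIndependent_cartan (p : Fin 6 → ℝ) :
    LinearIndependent ℝ ![X1cartan p, X2cartan p, Ycartan p] := by
  rw [Fintype.linearIndependent_iff]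
  intro g hg i
  fin_cases i
  · simpa [Fin.sum_univ_three, X1cartan, X2cartan, Ycartan] using congrFun hg 4
  · simpa [Fin.sum_univ_three, X1cartan, X2cartan, Ycartan] using congrFun hg 5
  · simpa [Fin.sum_univ_three, X1cartan, X2cartan, Ycartan] using congrFun hg 0

/-- The contact form `du − u₁ dt` at `p`. -/
def contactForm (p : Fin 6 → ℝ) : Module.Dual ℝ (Fin 6 → ℝ) :=
  LinearMap.proj 1 - p 3 • LinearMap.proj 0

@[simp]
theorem contactForm_apply (p w : Fin 6 → ℝ) : contactForm p w = w 1 - p 3 * w 0 := rfl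

theorem span_derived_cartan_eq_ker (p : Fin 6 → ℝ) :
    Submodule.span ℝ ({X1cartan p, X2cartan p, Ycartan p, vfLie X1cartan X2cartan p,
      vfLie X1cartan Ycartan p, vfLie X2cartan Ycartan p} : Set (Fin 6 → ℝ)) =
      LinearMap.ker (contactForm p) := by
  simp only [vfLie_X1cartan_X2cartan, vfLie_X1cartan_Ycartan, vfLie_X2cartan_Ycartan]
  apply le_antisymm
  · rw [Submodule.span_le]
    simp [Set.insert_subset_iff, X1cartan, X2cartan, Ycartan]
  · intro w hw
    have hw : w 1 = p 3 * w 0 := by simpa [sub_eq_zero] using hw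
    have hdecomp : w = w 4 • X1cartan p + w 5 • X2cartan p + w 0 • Ycartan p
        + (w 3 - p 4 * w 0) • ![0, 0, 0, 1, 0, 0] + (w 2 - p 5 * w 0) • ![0, 0, 1, 0, 0, 0] := by
      funext i
      fin_cases i <;> simp [X1cartan, X2cartan, Ycartan] <;> linarith
    rw [hdecomp]
    refine add_mem (add_mem (add_mem (add_mem ?_ ?_) ?_) ?_) ?_ <;>
      exact Submodule.smul_mem _ _ (Submodule.subset_span (by simp))

theorem contactForm_ne_zero (p : Fin 6 → ℝ) : contactForm p ≠ 0 := by
  intro h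
  simpa using LinearMap.congr_fun h (Pi.single 1 1)

theorem finrank_span_derived_cartan (p : Fin 6 → ℝ) :
    Module.finrank ℝ (Submodule.span ℝ ({X1cartan p, X2cartan p, Ycartan p,
      vfLie X1cartan X2cartan p, vfLie X1cartan Ycartan p, vfLie X2cartan Ycartan p} :
        Set (Fin 6 → ℝ))) = 5 := by
  have h := (contactForm p).finrank_ker_add_one_of_ne_zero (contactForm_ne_zero p)
  rw [span_derived_cartan_eq_ker]
  simp only [Module.finrank_fin_fun] at h
  omega

theorem span_second_derived_cartan_eq_top (p : Fin 6 → ℝ) :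
    Submodule.span ℝ
      ({X1cartan p, X2cartan p, Ycartan p, vfLie X1cartan X2cartan p,
        vfLie X1cartan Ycartan p, vfLie X2cartan Ycartan p,
        vfLie X1cartan (vfLie X1cartan X2cartan) p,
        vfLie X1cartan (vfLie X1cartan Ycartan) p,
        vfLie X1cartan (vfLie X2cartan Ycartan) p,
        vfLie X2cartan (vfLie X1cartan X2cartan) p,
        vfLie X2cartan (vfLie X1cartan Ycartan) p,
        vfLie X2cartan (vfLie X2cartan Ycartan) p,
        vfLie Ycartan (vfLie X1cartan X2cartan) p,
        vfLie Ycartan (vfLie X1cartan Ycartan) p,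
        vfLie Ycartan (vfLie X2cartan Ycartan) p} : Set (Fin 6 → ℝ)) = ⊤ := by
  have hcontact : contactForm p ![0, 1, 0, 0, 0, 0] ≠ 0 := by simp
  rw [eq_top_iff, ← Module.Dual.ker_sup_span_singleton_eq_top hcontact]
  refine sup_le ?_ ((Submodule.span_singleton_le_iff_mem _ _).2 ?_)
  · rw [← span_derived_cartan_eq_ker]
    exact Submodule.span_mono (by intro x; simp only [Set.mem_insert_iff]; tauto)
  · rw [← neg_neg ![(0 : ℝ), 1, 0, 0, 0, 0], show -![(0 : ℝ), 1, 0, 0, 0, 0] =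
      vfLie Ycartan (vfLie X1cartan Ycartan) p by rw [vfLie_Ycartan_vfLie_X1cartan_Ycartan]]
    exact neg_mem (Submodule.subset_span (by simp))

theorem X1cartan_X2cartan_eq_const (i : Fin 2) :
    ![X1cartan, X2cartan] i = fun _ => ![X1cartan 0, X2cartan 0] i := by
  fin_cases i <;> rfl

theorem vfLie_Xcartan_vfLie_Ycartan_Xcartan (i j : Fin 2) :
    vfLie (![X1cartan, X2cartan] i) (vfLie Ycartan (![X1cartan, X2cartan] j)) = fun _ => 0 := by
  rw [X1cartan_X2cartan_eq_const i, X1cartan_X2cartan_eq_const j, vfLie_Ycartan_const,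
    vfLie_const_const]

/-- Theorem 1 (model): the Cartan distribution `D` on `J^{2,1}(ℝ,ℝ²)`, annihilated by
`du − u₁dt, du₁ − u₂dt, dv − v₁dt`, has rank 3, `[D,D]` has rank 5,
`[D,[D,D]] = Tℝ⁶`, and `D` is degenerated parabolic: all `[Xᵢ, Yⱼ]`, `Yⱼ = [Y,Xⱼ]`,
lie in `[D,D]`, i.e. the form `(a_{ij})` vanishes identically. -/
theorem stmt_14 :
    (∀ p w : Fin 6 → ℝ,
      (w ∈ Submodule.span ℝ {X1cartan p, X2cartan p, Ycartan p} ↔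
        (w 1 - p 3 * w 0 = 0 ∧ w 3 - p 4 * w 0 = 0 ∧ w 2 - p 5 * w 0 = 0))) ∧
    (∀ p, LinearIndependent ℝ ![X1cartan p, X2cartan p, Ycartan p]) ∧
    (∀ p, Module.finrank ℝ (Submodule.span ℝ
      ({X1cartan p, X2cartan p, Ycartan p, vfLie X1cartan X2cartan p,
        vfLie X1cartan Ycartan p, vfLie X2cartan Ycartan p} : Set (Fin 6 → ℝ))) = 5) ∧
    (∀ p, Submodule.span ℝ
      ({X1cartan p, X2cartan p, Ycartan p, vfLie X1cartan X2cartan p,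
        vfLie X1cartan Ycartan p, vfLie X2cartan Ycartan p,
        vfLie X1cartan (vfLie X1cartan X2cartan) p,
        vfLie X1cartan (vfLie X1cartan Ycartan) p,
        vfLie X1cartan (vfLie X2cartan Ycartan) p,
        vfLie X2cartan (vfLie X1cartan X2cartan) p,
        vfLie X2cartan (vfLie X1cartan Ycartan) p,
        vfLie X2cartan (vfLie X2cartan Ycartan) p,
        vfLie Ycartan (vfLie X1cartan X2cartan) p,
        vfLie Ycartan (vfLie X1cartan Ycartan) p,
        vfLie Ycartan (vfLie X2cartan Ycartan) p} : Set (Fin 6 → ℝ)) = ⊤) ∧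
    (∀ (i j : Fin 2) p, vfLie (![X1cartan, X2cartan] i)
        (vfLie Ycartan (![X1cartan, X2cartan] j)) p ∈
      Submodule.span ℝ {X1cartan p, X2cartan p, Ycartan p,
        vfLie Ycartan X1cartan p, vfLie Ycartan X2cartan p}) := by
  refine ⟨mem_span_cartan_iff, linearIndependent_cartan, finrank_span_derived_cartan,
    span_second_derived_cartan_eq_top, fun i j p => ?_⟩
  rw [vfLie_Xcartan_vfLie_Ycartan_Xcartan]
  exact zero_mem _
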